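/- Fix real numbers t and y₀ satisfying the nonvanishing conditions of the setup and additionally 3y₀ + √3 ≠ 0. With P, Q, R and P'', Q'', R'' defined by the explicit formulas of the setup, the three lines PR'', QP'', RQ'' are concurrent: they all pass through the point (0, (√3·y₀ − 3)/(3y₀ + √3)). -/

import Mathlib

open Complex

/-- Abbreviation for `√3`. -/
noncomputable def sqrt3 : ℝ := Real.sqrt 3

/-- `P = (−1 + 2(1−t²)/(1+t²), 4t/(1+t²))`, a point of the circle of center `(-1,0)`
and radius `2`. -/
noncomputable def Pt (t : ℝ) : ℂ :=
  ⟨-1 + 2 * (1 - t ^ 2) / (1 + t ^ 2), 4 * t / (1 + t ^ 2)⟩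

/-- `Q = (−2(√3·t+1)/(t²+1), −(√3·t²+2t−√3)/(t²+1))`, obtained from `P` by a `120°`
rotation about `(-1,0)`. -/
noncomputable def Qt (t : ℝ) : ℂ :=
  ⟨-2 * (sqrt3 * t + 1) / (t ^ 2 + 1), -(sqrt3 * t ^ 2 + 2 * t - sqrt3) / (t ^ 2 + 1)⟩

/-- `R = (2(√3·t−1)/(t²+1), (√3·t²−2t−√3)/(t²+1))`, obtained from `Q` by a `120°`
rotation about `(-1,0)`. -/
noncomputable def Rt (t : ℝ) : ℂ :=
  ⟨2 * (sqrt3 * t - 1) / (t ^ 2 + 1), (sqrt3 * t ^ 2 - 2 * t - sqrt3) / (t ^ 2 + 1)⟩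

/-- The point `z` lies on the conic `𝒦 : (3t²−1)x² + (2t³−6t)xy + (1−3t²)y² + (1−3t²) = 0`. -/
def OnK (t : ℝ) (z : ℂ) : Prop :=
  (3 * t ^ 2 - 1) * z.re ^ 2 + (2 * t ^ 3 - 6 * t) * z.re * z.im +
    (1 - 3 * t ^ 2) * z.im ^ 2 + (1 - 3 * t ^ 2) = 0

/-- First nonvanishing denominator factor `2t·y₀ − y₀² + 1`. -/
noncomputable def D₀ (t y : ℝ) : ℝ := 2 * t * y - y ^ 2 + 1

/-- Second nonvanishing denominator factor
`3t²y₀² + 2√3·t²y₀ − 3t² + 8t·y₀ − y₀² + 2√3·y₀ + 1`. -/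
noncomputable def D₁ (t y : ℝ) : ℝ :=
  3 * t ^ 2 * y ^ 2 + 2 * sqrt3 * t ^ 2 * y - 3 * t ^ 2 + 8 * t * y - y ^ 2 + 2 * sqrt3 * y + 1

/-- Third nonvanishing denominator factor
`3t²y₀² − 2√3·t²y₀ − 3t² + 8t·y₀ − y₀² − 2√3·y₀ + 1`. -/
noncomputable def D₂ (t y : ℝ) : ℝ :=
  3 * t ^ 2 * y ^ 2 - 2 * sqrt3 * t ^ 2 * y - 3 * t ^ 2 + 8 * t * y - y ^ 2 - 2 * sqrt3 * y + 1

/-- The point `P''` of the setup of Theorem 2. -/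
noncomputable def Ppp (t y : ℝ) : ℂ :=
  ⟨(3 * t ^ 2 - 1) * (y ^ 2 + 1) / ((t ^ 2 + 1) * D₀ t y),
   2 * (t ^ 2 * y + 2 * t - y) * (t * y - 1) / ((t ^ 2 + 1) * D₀ t y)⟩

/-- The point `Q''` of the setup of Theorem 2. -/
noncomputable def Qpp (t y : ℝ) : ℂ :=
  ⟨-2 * (3 * sqrt3 * t ^ 3 + 3 * t ^ 2 - sqrt3 * t - 1) * (y ^ 2 + 1) / (D₁ t y * (t ^ 2 + 1)),
   -(sqrt3 * t ^ 4 * y ^ 2 + 6 * t ^ 4 * y - 2 * t ^ 3 * y ^ 2 + 3 * sqrt3 * t ^ 4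
     - 8 * sqrt3 * t ^ 2 * y ^ 2 + 6 * t ^ 3 + 4 * t ^ 2 * y - 10 * t * y ^ 2
     - 4 * sqrt3 * t ^ 2 - sqrt3 * y ^ 2 - 2 * t - 2 * y + sqrt3) / (D₁ t y * (t ^ 2 + 1))⟩

/-- The point `R''` of the setup of Theorem 2. -/
noncomputable def Rpp (t y : ℝ) : ℂ :=
  ⟨2 * (3 * sqrt3 * t ^ 3 - 3 * t ^ 2 - sqrt3 * t + 1) * (y ^ 2 + 1) / (D₂ t y * (t ^ 2 + 1)),
   (sqrt3 * t ^ 4 * y ^ 2 - 6 * t ^ 4 * y + 2 * t ^ 3 * y ^ 2 + 3 * sqrt3 * t ^ 4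
     - 8 * sqrt3 * t ^ 2 * y ^ 2 - 6 * t ^ 3 - 4 * t ^ 2 * y + 10 * t * y ^ 2
     - 4 * sqrt3 * t ^ 2 - sqrt3 * y ^ 2 + 2 * t + 2 * y + sqrt3) / (D₂ t y * (t ^ 2 + 1))⟩

/-! All points are explicit rational functions of `t`, `y₀` and `√3`, so each concurrency is the
vanishing of the cross product `(B - A) × (X - A)` with `X` the perspector. Clearing the
denominators `Dᵢ`, `t² + 1` and `3y₀ + √3` turns it into a polynomial identity in `t`, `y₀`, `√3`
which holds modulo `√3² = 3`. -/

theorem Complex.collinear_of_cross_eq_zero {a b c : ℂ}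
    (h : (b.re - a.re) * (c.im - a.im) - (b.im - a.im) * (c.re - a.re) = 0) :
    Collinear ℝ ({a, b, c} : Set ℂ) := by
  rcases eq_or_ne a b with rfl | hab
  · simpa using collinear_pair ℝ a c
  have hn : (b.re - a.re) ^ 2 + (b.im - a.im) ^ 2 ≠ 0 := by
    simpa [Complex.normSq_apply, ← sq] using (Complex.normSq_pos.2 (sub_ne_zero.2 hab.symm)).ne'
  have hc : c ∈ line[ℝ, a, b] := by
    convert AffineMap.lineMap_mem_affineSpan_pair
      (((c.re - a.re) * (b.re - a.re) + (c.im - a.im) * (b.im - a.im)) /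
        ((b.re - a.re) ^ 2 + (b.im - a.im) ^ 2)) a b using 1
    apply Complex.ext <;>
      simp only [AffineMap.lineMap_apply_module', Complex.add_re, Complex.add_im,
        Complex.real_smul, Complex.re_ofReal_mul, Complex.im_ofReal_mul, Complex.sub_re,
        Complex.sub_im] <;>
      field_simp
    · linear_combination (a.im - b.im) * h
    · linear_combination (b.re - a.re) * h
  have := collinear_insert_of_mem_affineSpan_pair hc
  rwa [Set.insert_comm, Set.pair_comm] at this

theorem sqrt3_sq : sqrt3 ^ 2 = 3 := Real.sq_sqrt (by norm_num)

noncomputable def perspector (y : ℝ) : ℂ := ⟨0, (sqrt3 * y - 3) / (3 * y + sqrt3)⟩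

section

variable {t y : ℝ}

theorem collinear_Pt_Rpp_perspector (hD : D₂ t y ≠ 0) (hy : 3 * y + sqrt3 ≠ 0) :
    Collinear ℝ {Pt t, Rpp t y, perspector y} := by
  apply Complex.collinear_of_cross_eq_zero
  simp only [Pt, Rpp, perspector]
  field_simp
  rw [D₂]
  grind [sqrt3_sq]

theorem collinear_Qt_Ppp_perspector (hD : D₀ t y ≠ 0) (hy : 3 * y + sqrt3 ≠ 0) :
    Collinear ℝ {Qt t, Ppp t y, perspector y} := by
  apply Complex.collinear_of_cross_eq_zero
  simp only [Qt, Ppp, perspector]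
  field_simp
  rw [D₀]
  grind [sqrt3_sq]

theorem collinear_Rt_Qpp_perspector (hD : D₁ t y ≠ 0) (hy : 3 * y + sqrt3 ≠ 0) :
    Collinear ℝ {Rt t, Qpp t y, perspector y} := by
  apply Complex.collinear_of_cross_eq_zero
  simp only [Rt, Qpp, perspector]
  field_simp
  rw [D₁]
  grind [sqrt3_sq]

end

/-- The three lines `PR''`, `QP''`, `RQ''` are concurrent at `(0, (√3·y₀−3)/(3y₀+√3))`. -/
theorem third_perspector (t y₀ : ℝ)
    (h₀ : D₀ t y₀ ≠ 0) (h₁ : D₁ t y₀ ≠ 0) (h₂ : D₂ t y₀ ≠ 0)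
    (h₃ : 3 * y₀ + sqrt3 ≠ 0) :
    Collinear ℝ ({Pt t, Rpp t y₀, (⟨0, (sqrt3 * y₀ - 3) / (3 * y₀ + sqrt3)⟩ : ℂ)} : Set ℂ) ∧
    Collinear ℝ ({Qt t, Ppp t y₀, (⟨0, (sqrt3 * y₀ - 3) / (3 * y₀ + sqrt3)⟩ : ℂ)} : Set ℂ) ∧
    Collinear ℝ ({Rt t, Qpp t y₀, (⟨0, (sqrt3 * y₀ - 3) / (3 * y₀ + sqrt3)⟩ : ℂ)} : Set ℂ) :=
  ⟨collinear_Pt_Rpp_perspector h₂ h₃, collinear_Qt_Ppp_perspector h₀ h₃,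
    collinear_Rt_Qpp_perspector h₁ h₃⟩
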